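/- arXiv:2302.08502 — 2 statements merged into one kernel-verified Lean document; each statement's English description precedes it below -/
import Mathlib

section
/- The Haar-random-circuit line tension E_H(v) = [log((d²+1)/d) + ((1+v)/2) log((1+v)/2) + ((1−v)/2) log((1−v)/2)]/log d, defined for v ∈ (−1,1) and integer d ≥ 2, is even, convex, satisfies E_H(v) ≥ E_H(0) > 0, and its derivative equation E_H(0) − 2E_H(v) + 2v E_H'(v) = 0 on (0,1) is solved by v = v_d := (d−1)/√(d²+1). -/
/-- The Haar-random-circuit line tension (Eq. (eq:linetensionHaar) of the paper). -/
noncomputable def lineTensionHaar (d : ℕ) (v : ℝ) : ℝ :=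
  (Real.log (((d : ℝ) ^ 2 + 1) / d)
      + ((1 + v) / 2) * Real.log ((1 + v) / 2)
      + ((1 - v) / 2) * Real.log ((1 - v) / 2)) / Real.log d

open Real Set

/-! With `p = (1 + v) / 2` the numerator of `E_H` is `log ((d² + 1) / d) - H p`, where `H` is the
binary entropy. Evenness, convexity and the minimum at `v = 0` (where `H` attains its maximum
`log 2`) are the symmetry and concavity of `H`. Since `H' p = log (1 - p) - log p`, the stationarity
expression collapses to `-(log ((d² + 1) / d) + log ((1 - v²) / 2)) / log d`, which vanishes when
`(1 - v²) / 2 = d / (d² + 1)`, i.e. at `v = (d - 1) / √(d² + 1)`. -/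

lemma lineTensionHaar_eq_binEntropy (d : ℕ) (v : ℝ) :
    lineTensionHaar d v = (log (((d : ℝ) ^ 2 + 1) / d) - binEntropy ((1 + v) / 2)) / log d := by
  rw [lineTensionHaar, binEntropy, show (1 - v) / 2 = 1 - (1 + v) / 2 by ring, log_inv, log_inv]
  ring

lemma lineTensionHaar_neg (d : ℕ) (v : ℝ) : lineTensionHaar d (-v) = lineTensionHaar d v := by
  rw [lineTensionHaar_eq_binEntropy, lineTensionHaar_eq_binEntropy, ← binEntropy_one_sub]
  ring_nf

lemma concaveOn_binEntropy_one_add_div_two :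
    ConcaveOn ℝ (Icc (-1) 1) fun v : ℝ => binEntropy ((1 + v) / 2) := by
  let g : ℝ →ᵃ[ℝ] ℝ := AffineMap.const ℝ ℝ (2⁻¹ : ℝ) + (2⁻¹ : ℝ) • AffineMap.id ℝ ℝ
  have hg : ∀ v, g v = (1 + v) / 2 := fun v => by simp [g]; ring
  have hpre : g ⁻¹' Icc 0 1 = Icc (-1) 1 := by
    ext v
    simp only [mem_preimage, mem_Icc, hg]
    constructor <;> intro h <;> constructor <;> linarith [h.1, h.2]
  have := strictConcave_binEntropy.concaveOn.comp_affineMap g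
  rw [hpre] at this
  simpa [Function.comp_def, hg] using this

lemma convexOn_lineTensionHaar (d : ℕ) : ConvexOn ℝ (Icc (-1) 1) (lineTensionHaar d) := by
  have h := (concaveOn_binEntropy_one_add_div_two.neg.add_const
    (log (((d : ℝ) ^ 2 + 1) / d))).smul (inv_nonneg.2 (log_natCast_nonneg d))
  refine h.congr fun v _ => ?_
  simp only [Pi.add_apply, Pi.neg_apply, smul_eq_mul, lineTensionHaar_eq_binEntropy]
  ring

lemma lineTensionHaar_zero_le (d : ℕ) (v : ℝ) : lineTensionHaar d 0 ≤ lineTensionHaar d v := by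
  rw [lineTensionHaar_eq_binEntropy, lineTensionHaar_eq_binEntropy]
  refine div_le_div_of_nonneg_right ?_ (log_natCast_nonneg d)
  rw [add_zero, one_div, binEntropy_two_inv]
  linarith [binEntropy_le_log_two (p := (1 + v) / 2)]

lemma lineTensionHaar_zero_pos {d : ℕ} (hd : 2 ≤ d) : 0 < lineTensionHaar d 0 := by
  have hd' : (2 : ℝ) ≤ d := by exact_mod_cast hd
  rw [lineTensionHaar_eq_binEntropy, add_zero, one_div, binEntropy_two_inv]
  refine div_pos (sub_pos.2 (log_lt_log two_pos ?_)) (log_pos (by linarith))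
  rw [lt_div_iff₀ (by linarith)]
  nlinarith

lemma hasDerivAt_lineTensionHaar (d : ℕ) {v : ℝ} (hv : v ∈ Ioo (-1) 1) :
    HasDerivAt (lineTensionHaar d)
      ((log ((1 + v) / 2) - log ((1 - v) / 2)) / (2 * log d)) v := by
  have hp : HasDerivAt (fun v : ℝ => (1 + v) / 2) 2⁻¹ v := by
    simpa using ((hasDerivAt_id v).const_add 1).div_const 2
  have hH := (hasDerivAt_binEntropy (p := (1 + v) / 2) (by linarith [hv.1])
    (by linarith [hv.2])).comp v hp
  rw [funext (lineTensionHaar_eq_binEntropy d)]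
  refine ((hH.const_sub (log (((d : ℝ) ^ 2 + 1) / d))).div_const (log d)).congr_deriv ?_
  rw [show 1 - (1 + v) / 2 = (1 - v) / 2 by ring]
  field_simp
  ring

lemma lineTensionHaar_stationarity (d : ℕ) {v : ℝ} (hv : v ∈ Ioo (-1) 1) :
    lineTensionHaar d 0 - 2 * lineTensionHaar d v + 2 * v * deriv (lineTensionHaar d) v
      = -(log (((d : ℝ) ^ 2 + 1) / d) + log ((1 - v ^ 2) / 2)) / log d := by
  have hp : 0 < (1 + v) / 2 := by linarith [hv.1]
  have hq : 0 < (1 - v) / 2 := by linarith [hv.2]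
  have hlog : log ((1 - v ^ 2) / 2) = log ((1 + v) / 2) + log ((1 - v) / 2) + log 2 := by
    rw [← log_mul hp.ne' hq.ne', ← log_mul (by positivity) two_ne_zero]
    ring_nf
  rw [(hasDerivAt_lineTensionHaar d hv).deriv, hlog, lineTensionHaar, lineTensionHaar,
    add_zero, sub_zero, one_div, log_inv]
  field_simp
  ring

noncomputable def haarCriticalSlope (d : ℝ) : ℝ := (d - 1) / √(d ^ 2 + 1)

lemma haarCriticalSlope_mem_Ioo {d : ℝ} (hd : 0 < d) : haarCriticalSlope d ∈ Ioo (-1) 1 := by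
  have hs : (d - 1) ^ 2 < √(d ^ 2 + 1) ^ 2 := by
    rw [sq_sqrt (by positivity)]; nlinarith
  have := abs_lt_of_sq_lt_sq' hs (sqrt_nonneg _)
  rw [haarCriticalSlope, mem_Ioo, lt_div_iff₀ (by positivity), div_lt_one (by positivity)]
  constructor <;> linarith [this.1, this.2]

lemma one_sub_haarCriticalSlope_sq_div_two {d : ℝ} (hd : d ≠ 0) :
    (1 - haarCriticalSlope d ^ 2) / 2 = ((d ^ 2 + 1) / d)⁻¹ := by
  have hs : 0 < d ^ 2 + 1 := by positivity
  rw [haarCriticalSlope, div_pow, sq_sqrt hs.le]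
  field_simp
  ring

/-- The Haar line tension `E_H` is even, convex on `(-1,1)`, minimised at `0`
with `E_H(0) > 0`, and the stationarity equation
`E_H(0) - 2 E_H(v) + 2 v E_H'(v) = 0` is solved by `v_d = (d-1)/√(d²+1)`. -/
theorem lineTensionHaar_properties (d : ℕ) (hd : 2 ≤ d) :
    (∀ v : ℝ, lineTensionHaar d (-v) = lineTensionHaar d v) ∧
    ConvexOn ℝ (Set.Ioo (-1 : ℝ) 1) (lineTensionHaar d) ∧
    (∀ v ∈ Set.Ioo (-1 : ℝ) 1, lineTensionHaar d 0 ≤ lineTensionHaar d v) ∧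
    0 < lineTensionHaar d 0 ∧
    lineTensionHaar d 0
        - 2 * lineTensionHaar d (((d : ℝ) - 1) / Real.sqrt ((d : ℝ) ^ 2 + 1))
        + 2 * (((d : ℝ) - 1) / Real.sqrt ((d : ℝ) ^ 2 + 1))
          * deriv (lineTensionHaar d) (((d : ℝ) - 1) / Real.sqrt ((d : ℝ) ^ 2 + 1)) = 0 := by
  have hd₀ : (0 : ℝ) < d := by positivity
  refine ⟨lineTensionHaar_neg d, (convexOn_lineTensionHaar d).subset Ioo_subset_Icc_self
    (convex_Ioo _ _), fun v _ => lineTensionHaar_zero_le d v, lineTensionHaar_zero_pos hd, ?_⟩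
  change lineTensionHaar d 0 - 2 * lineTensionHaar d (haarCriticalSlope d)
    + 2 * haarCriticalSlope d * deriv (lineTensionHaar d) (haarCriticalSlope d) = 0
  rw [lineTensionHaar_stationarity d (haarCriticalSlope_mem_Ioo hd₀),
    one_sub_haarCriticalSlope_sq_div_two hd₀.ne', log_inv, add_neg_cancel, neg_zero, zero_div]
end

section
/- Define A_{x,y} for integers x ≥ 0, 0 ≤ y ≤ x+1 by the recurrence: A_{x,0} = (2d²/(d²+1))^x; A_{x,y} = (d²/(d²+1))(A_{x−1,y} + A_{x,y−1}) for 0 < y ≤ x; and A_{x,x+1} = (d²/(d²+1))(A_{x−1,x} + A_{x,x}). Then for fixed real d > 1 there exist constants 0 < c₁ ≤ c₂ and T such that for all t ≥ T, c₁ (2d²/(d²+1))^{2t} t^{−1/2} ≤ A_{t,t+1} ≤ c₂ (2d²/(d²+1))^{2t} t^{−1/2}. -/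
/-!
Write `q = d²/(d²+1)` and `r = 1/q ∈ (1, 2)`. Then `A_{x,y} = q^{x+y} F_{x,y}`, where `F` obeys
Pascal's rule `F_{x,y} = F_{x-1,y} + F_{x,y-1}` below the staircase, `F_{x,0} = 2^x`, and
`F_{x,x+1} = r F_{x-1,x} + F_{x,x}` on it. Splitting `F` into the contribution of the base row and
that of the staircase gives the closed form
`F_{x,y} = ∑_{y ≤ i ≤ x} C(x+y, i) + 2 ∑_{j<y} r^j C(x+y-1-j, x)`,
whose first sum is empty on the staircase: `A_{t,t+1} = 2 q^{2t+1} ∑_{j≤t} r^j C(2t-j, t)`.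
As `2^j C(2t-j, t) ≤ C(2t, t)` and `r < 2`, this sum lies between `C(2t, t)` and
`2 C(2t, t) / (2 - r)`, and `C(2t, t) ≍ 4^t / √t`.
-/

open Finset

namespace Nat

theorem two_mul_choose_le_choose_succ {n k : ℕ} (h : n + 1 ≤ 2 * k) :
    2 * n.choose k ≤ (n + 1).choose k := by
  have hpascal := choose_mul_succ_eq n k
  refine Nat.le_of_mul_le_mul_right ?_ (succ_pos n)
  calc 2 * n.choose k * (n + 1) = (n + 1).choose k * (2 * (n + 1 - k)) := by
        rw [mul_assoc, hpascal]; ring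
    _ ≤ (n + 1).choose k * (n + 1) := Nat.mul_le_mul_left _ (by omega)

theorem two_pow_mul_choose_le_centralBinom {k j : ℕ} (hj : j ≤ 2 * k) :
    2 ^ j * (2 * k - j).choose k ≤ centralBinom k := by
  induction j with
  | zero => simp [centralBinom_eq_two_mul_choose]
  | succ j ih =>
    have step := two_mul_choose_le_choose_succ (n := 2 * k - (j + 1)) (k := k) (by omega)
    rw [show 2 * k - (j + 1) + 1 = 2 * k - j by omega] at step
    calc 2 ^ (j + 1) * (2 * k - (j + 1)).choose k
        = 2 ^ j * (2 * (2 * k - (j + 1)).choose k) := by ring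
      _ ≤ 2 ^ j * (2 * k - j).choose k := Nat.mul_le_mul_left _ step
      _ ≤ centralBinom k := ih (by omega)

theorem choose_two_mul_succ_succ (n : ℕ) :
    (2 * (n + 1)).choose (n + 1) = 2 * (2 * n + 1).choose n := by
  rw [show 2 * (n + 1) = 2 * n + 1 + 1 by ring, choose_succ_succ', choose_symm_half]
  ring

theorem two_mul_add_one_mul_centralBinom_sq_le (n : ℕ) :
    (2 * n + 1) * centralBinom n ^ 2 ≤ 16 ^ n := by
  induction n with
  | zero => simp
  | succ n ih =>
    have hrec := succ_mul_centralBinom_succ n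
    refine Nat.le_of_mul_le_mul_left ?_ (show 0 < (n + 1) ^ 2 by positivity)
    calc (n + 1) ^ 2 * ((2 * (n + 1) + 1) * centralBinom (n + 1) ^ 2)
        = (2 * n + 3) * ((n + 1) * centralBinom (n + 1)) ^ 2 := by ring
      _ = (2 * n + 3) * (2 * n + 1) * (4 * ((2 * n + 1) * centralBinom n ^ 2)) := by
        rw [hrec]; ring
      _ ≤ 4 * (n + 1) ^ 2 * (4 * 16 ^ n) := Nat.mul_le_mul (by nlinarith) (by gcongr)
      _ = (n + 1) ^ 2 * 16 ^ (n + 1) := by ring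

theorem sixteen_pow_le_four_mul_mul_centralBinom_sq {n : ℕ} (hn : 0 < n) :
    16 ^ n ≤ 4 * n * centralBinom n ^ 2 := by
  induction n, hn using Nat.le_induction with
  | base => decide
  | succ n hn ih =>
    have hrec := succ_mul_centralBinom_succ n
    refine Nat.le_of_mul_le_mul_left ?_ (show 0 < (n + 1) ^ 2 by positivity)
    calc (n + 1) ^ 2 * 16 ^ (n + 1) = (n + 1) ^ 2 * (16 * 16 ^ n) := by ring
      _ ≤ (n + 1) ^ 2 * (16 * (4 * n * centralBinom n ^ 2)) := by gcongr
      _ = 16 * (n + 1) * (4 * n * (n + 1)) * centralBinom n ^ 2 := by ring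
      _ ≤ 16 * (n + 1) * (2 * n + 1) ^ 2 * centralBinom n ^ 2 := by gcongr; nlinarith
      _ = (n + 1) ^ 2 * (4 * (n + 1) * centralBinom (n + 1) ^ 2) := by
        rw [show (n + 1) ^ 2 * (4 * (n + 1) * centralBinom (n + 1) ^ 2)
          = 4 * (n + 1) * ((n + 1) * centralBinom (n + 1)) ^ 2 by ring, hrec]; ring

theorem real_sqrt_mul_centralBinom_le (n : ℕ) : √(n : ℝ) * n.centralBinom ≤ 4 ^ n := by
  have h : (n : ℝ) * n.centralBinom ^ 2 ≤ 16 ^ n := by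
    exact_mod_cast (Nat.mul_le_mul_right _ (by omega)).trans
      (two_mul_add_one_mul_centralBinom_sq_le n)
  refine (pow_le_pow_iff_left₀ (by positivity) (by positivity) two_ne_zero).mp ?_
  rw [mul_pow, Real.sq_sqrt n.cast_nonneg, ← pow_mul, mul_comm n 2, pow_mul]
  norm_num [h]

theorem four_pow_le_two_mul_real_sqrt_mul_centralBinom {n : ℕ} (hn : 0 < n) :
    (4 : ℝ) ^ n ≤ 2 * √(n : ℝ) * n.centralBinom := by
  have h : (16 : ℝ) ^ n ≤ 4 * n * n.centralBinom ^ 2 := by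
    exact_mod_cast sixteen_pow_le_four_mul_mul_centralBinom_sq hn
  refine (pow_le_pow_iff_left₀ (by positivity) (by positivity) two_ne_zero).mp ?_
  rw [mul_pow, mul_pow, Real.sq_sqrt n.cast_nonneg, ← pow_mul, mul_comm n 2, pow_mul]
  norm_num
  linarith

end Nat

section Stair

variable {R : Type*} [CommSemiring R]

/-- `stairBase` and `stairTop` are the two sums of the closed form of `F` above, and `stair r` is
`F`. -/
def stairBase (x y : ℕ) : ℕ :=
  ∑ i ∈ range (x + 1 - y), (x + y).choose (y + i)

def stairTop (r : R) (x y : ℕ) : R :=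
  ∑ j ∈ range y, r ^ j * ((x + y - 1 - j).choose x : R)

def stair (r : R) (x y : ℕ) : R :=
  stairBase x y + 2 * stairTop r x y

theorem stairBase_zero_right (x : ℕ) : stairBase x 0 = 2 ^ x := by
  simp [stairBase, Nat.sum_range_choose]

theorem stairBase_self_succ (x : ℕ) : stairBase x (x + 1) = 0 := by
  simp [stairBase]

theorem stairBase_self (x : ℕ) : stairBase x x = (2 * x).choose x := by
  simp [stairBase, two_mul]

theorem stairBase_succ_succ {m n : ℕ} (h : m ≤ n) :
    stairBase (n + 1) (m + 1) = stairBase n (m + 1) + stairBase (n + 1) m := by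
  obtain ⟨k, rfl⟩ := Nat.exists_eq_add_of_le h
  have hpascal : ∀ i, (2 * m + k + 2).choose (m + 1 + i)
      = (2 * m + k + 1).choose (m + i) + (2 * m + k + 1).choose (m + i + 1) := fun i => by
    rw [show m + 1 + i = m + i + 1 by ring]; exact Nat.choose_succ_succ' _ _
  simp only [stairBase, show m + k + 1 + 1 - (m + 1) = k + 1 by omega,
    show m + k + 1 - (m + 1) = k by omega, show m + k + 1 + 1 - m = k + 1 + 1 by omega,
    show m + k + 1 + (m + 1) = 2 * m + k + 2 by ring,
    show m + k + (m + 1) = 2 * m + k + 1 by ring, show m + k + 1 + m = 2 * m + k + 1 by ring,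
    hpascal, sum_add_distrib]
  rw [sum_range_succ _ (k + 1), sum_range_succ (fun i => (2 * m + k + 1).choose (m + i + 1))]
  simp only [add_right_comm m 1, ← add_assoc]
  ring

theorem stairTop_zero_right (r : R) (x : ℕ) : stairTop r x 0 = 0 := by
  simp [stairTop]

theorem stairTop_succ_succ (r : R) (m n : ℕ) :
    stairTop r (n + 1) (m + 1) = stairTop r n (m + 1) + stairTop r (n + 1) m := by
  have hpascal : ∀ j ∈ range (m + 1), r ^ j * ((n + 1 + (m + 1) - 1 - j).choose (n + 1) : R)
      = r ^ j * ((n + (m + 1) - 1 - j).choose n : R)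
        + r ^ j * ((n + m - j).choose (n + 1) : R) := by
    intro j hj
    rw [show n + 1 + (m + 1) - 1 - j = n + m - j + 1 by grind,
      show n + (m + 1) - 1 - j = n + m - j by omega, Nat.choose_succ_succ']
    push_cast; ring
  rw [stairTop, sum_congr rfl hpascal, sum_add_distrib,
    sum_range_succ (fun j => r ^ j * ((n + m - j).choose (n + 1) : R))]
  simp [stairTop, show n + 1 + m - 1 = n + m by omega]

theorem stairTop_self_add_two (r : R) (n : ℕ) :
    stairTop r n (n + 2) = (2 * n + 1).choose n + r * stairTop r n (n + 1) := by
  rw [stairTop, sum_range_succ', stairTop, mul_sum]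
  simp only [show n + (n + 2) - 1 - 0 = 2 * n + 1 by omega, pow_zero, one_mul, pow_succ]
  rw [add_comm]
  congr 1
  refine sum_congr rfl fun j _ => ?_
  rw [show n + (n + 2) - 1 - (j + 1) = n + (n + 1) - 1 - j by omega]
  ring

theorem stair_zero_right (r : R) (x : ℕ) : stair r x 0 = 2 ^ x := by
  simp [stair, stairBase_zero_right, stairTop_zero_right]

theorem stair_self_succ (r : R) (x : ℕ) : stair r x (x + 1) = 2 * stairTop r x (x + 1) := by
  simp [stair, stairBase_self_succ]

theorem stair_succ_succ (r : R) {m n : ℕ} (h : m ≤ n) :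
    stair r (n + 1) (m + 1) = stair r n (m + 1) + stair r (n + 1) m := by
  simp only [stair, stairBase_succ_succ h, stairTop_succ_succ]
  push_cast
  ring

theorem stair_succ_add_two (r : R) (n : ℕ) :
    stair r (n + 1) (n + 2) = r * stair r n (n + 1) + stair r (n + 1) (n + 1) := by
  rw [stair_self_succ, stair_self_succ, stairTop_succ_succ, stairTop_self_add_two, stair,
    stairBase_self, Nat.choose_two_mul_succ_succ]
  push_cast
  ring

end Stair

theorem eq_pow_mul_stair {K : Type*} [Field K] {q : K} (hq : q ≠ 0) {A : ℕ → ℕ → K}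
    (h0 : ∀ x, A x 0 = (2 * q) ^ x)
    (hrec : ∀ x y, 0 < y → y ≤ x → A x y = q * (A (x - 1) y + A x (y - 1)))
    (htop : ∀ x, A x (x + 1) = q * (A (x - 1) x + A x x)) :
    ∀ x y, y ≤ x + 1 → A x y = q ^ (x + y) * stair q⁻¹ x y := by
  intro x
  induction x with
  | zero =>
    intro y hy
    obtain rfl | rfl : y = 0 ∨ y = 1 := by omega
    · simp [h0, stair_zero_right]
    · simp only [htop 0, Nat.zero_sub, h0, stair_self_succ, stairTop]
      norm_num
  | succ n ih =>
    intro y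
    induction y with
    | zero => intro _; rw [h0, stair_zero_right, mul_pow]; ring
    | succ m ihm =>
      intro hm
      obtain hmn | rfl : m ≤ n ∨ m = n + 1 := by omega
      · rw [hrec _ _ (by omega) (by omega), Nat.add_sub_cancel, Nat.add_sub_cancel,
          ih _ (by omega), ihm (by omega), stair_succ_succ _ hmn]
        ring
      · rw [htop, Nat.add_sub_cancel, ih _ le_rfl, ihm (by omega), stair_succ_add_two]
        field_simp
        ring

theorem centralBinom_le_stairTop {r : ℝ} (hr : 0 ≤ r) (t : ℕ) :
    (t.centralBinom : ℝ) ≤ stairTop r t (t + 1) := by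
  rw [stairTop, sum_range_succ']
  simp only [pow_zero, one_mul, Nat.sub_zero, show t + (t + 1) - 1 = 2 * t by omega,
    Nat.centralBinom_eq_two_mul_choose, le_add_iff_nonneg_left]
  positivity

theorem sub_mul_stairTop_le {r : ℝ} (hr : 0 ≤ r) (hr2 : r < 2) (t : ℕ) :
    (2 - r) * stairTop r t (t + 1) ≤ 2 * t.centralBinom := by
  have hterm : ∀ j ∈ range (t + 1),
      r ^ j * ((t + (t + 1) - 1 - j).choose t : ℝ) ≤ (r / 2) ^ j * t.centralBinom := by
    intro j hj
    have hC : ((2 * t - j).choose t : ℝ) * 2 ^ j ≤ t.centralBinom := by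
      exact_mod_cast (mul_comm _ _).trans_le
        (Nat.two_pow_mul_choose_le_centralBinom (k := t) (j := j) (by grind))
    calc r ^ j * ((t + (t + 1) - 1 - j).choose t : ℝ)
        ≤ r ^ j * (t.centralBinom / 2 ^ j) := by
          rw [show t + (t + 1) - 1 - j = 2 * t - j by omega]
          gcongr
          rwa [le_div_iff₀ (by positivity)]
      _ = (r / 2) ^ j * t.centralBinom := by rw [div_pow]; ring
  have hgeom : (2 - r) * ∑ j ∈ range (t + 1), (r / 2) ^ j ≤ 2 := by
    have := geom_sum_mul_neg (r / 2) (t + 1)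
    nlinarith [pow_nonneg (div_nonneg hr zero_le_two) (t + 1)]
  calc (2 - r) * stairTop r t (t + 1)
      ≤ (2 - r) * ∑ j ∈ range (t + 1), (r / 2) ^ j * t.centralBinom :=
        mul_le_mul_of_nonneg_left (sum_le_sum hterm) (by linarith)
    _ ≤ 2 * t.centralBinom := by
        rw [← sum_mul, ← mul_assoc]
        gcongr

theorem four_pow_div_sqrt_le_two_mul_stairTop {r : ℝ} (hr : 0 ≤ r) {t : ℕ} (ht : 0 < t) :
    4 ^ t / √(t : ℝ) ≤ 2 * stairTop r t (t + 1) := by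
  rw [div_le_iff₀ (by positivity)]
  nlinarith [Nat.four_pow_le_two_mul_real_sqrt_mul_centralBinom ht, centralBinom_le_stairTop hr t,
    Real.sqrt_nonneg t]

theorem two_mul_stairTop_le {r : ℝ} (hr : 0 ≤ r) (hr2 : r < 2) {t : ℕ} (ht : 0 < t) :
    2 * stairTop r t (t + 1) ≤ 4 / (2 - r) * (4 ^ t / √(t : ℝ)) := by
  have hs : 0 < √(t : ℝ) := by positivity
  rw [div_mul_div_comm, le_div_iff₀ (by nlinarith)]
  nlinarith [Nat.real_sqrt_mul_centralBinom_le t, sub_mul_stairTop_le hr hr2 t]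

/-- Asymptotics of the Haar-averaged influence-matrix norm `A_{t,t+1}`
(Appendix F, Eqs. (eq:recA), (eq:equation2)): the solution of the recurrence
`A_{x,0} = (2d²/(d²+1))^x`,
`A_{x,y} = (d²/(d²+1)) (A_{x-1,y} + A_{x,y-1})` for `0 < y ≤ x`,
`A_{x,x+1} = (d²/(d²+1)) (A_{x-1,x} + A_{x,x})`
satisfies `A_{t,t+1} = Θ((2d²/(d²+1))^{2t} t^{-1/2})` as `t → ∞`. -/
theorem A_asymptotics (d : ℝ) (hd : 1 < d) (A : ℕ → ℕ → ℝ)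
    (h0 : ∀ x : ℕ, A x 0 = (2 * d ^ 2 / (d ^ 2 + 1)) ^ x)
    (hrec : ∀ x y : ℕ, 0 < y → y ≤ x →
      A x y = d ^ 2 / (d ^ 2 + 1) * (A (x - 1) y + A x (y - 1)))
    (htop : ∀ x : ℕ,
      A x (x + 1) = d ^ 2 / (d ^ 2 + 1) * (A (x - 1) x + A x x)) :
    ∃ c₁ c₂ : ℝ, ∃ T : ℕ, 0 < c₁ ∧ c₁ ≤ c₂ ∧ ∀ t : ℕ, T ≤ t →
      c₁ * (2 * d ^ 2 / (d ^ 2 + 1)) ^ (2 * t) * (t : ℝ) ^ (-(1 : ℝ) / 2) ≤ A t (t + 1) ∧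
      A t (t + 1) ≤ c₂ * (2 * d ^ 2 / (d ^ 2 + 1)) ^ (2 * t) * (t : ℝ) ^ (-(1 : ℝ) / 2) := by
  set q : ℝ := d ^ 2 / (d ^ 2 + 1) with hq
  have hq0 : 0 < q := by positivity
  have hq2 : 1 < 2 * q := by rw [hq, ← mul_div_assoc, one_lt_div (by positivity)]; nlinarith
  have hr0 : 0 ≤ q⁻¹ := by positivity
  have hr2 : q⁻¹ < 2 := by rw [inv_lt_comm₀ hq0 two_pos]; linarith
  have h2q : 2 * d ^ 2 / (d ^ 2 + 1) = 2 * q := by rw [hq, mul_div_assoc]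
  have hA (t : ℕ) : A t (t + 1) = q ^ (2 * t) * q * (2 * stairTop q⁻¹ t (t + 1)) := by
    rw [eq_pow_mul_stair hq0.ne' (fun x => by rw [h0, h2q]) hrec htop t (t + 1) le_rfl,
      stair_self_succ, show t + (t + 1) = 2 * t + 1 by ring, pow_succ]
  refine ⟨q, 4 / (2 - q⁻¹) * q, 1, hq0, ?_, fun t ht => ?_⟩
  · exact le_mul_of_one_le_left hq0.le ((one_le_div (by linarith)).2 (by linarith))
  have hscale : (2 * d ^ 2 / (d ^ 2 + 1)) ^ (2 * t) * (t : ℝ) ^ (-(1 : ℝ) / 2)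
      = q ^ (2 * t) * (4 ^ t / √(t : ℝ)) := by
    rw [h2q, neg_div, Real.rpow_neg (Nat.cast_nonneg t), ← Real.sqrt_eq_rpow, mul_pow,
      pow_mul (2 : ℝ)]
    norm_num
    ring
  rw [mul_assoc, mul_assoc, hscale, hA]
  constructor
  · calc q * (q ^ (2 * t) * (4 ^ t / √(t : ℝ)))
        = q ^ (2 * t) * q * (4 ^ t / √(t : ℝ)) := by ring
      _ ≤ _ := by gcongr; exact four_pow_div_sqrt_le_two_mul_stairTop hr0 ht
  · calc q ^ (2 * t) * q * (2 * stairTop q⁻¹ t (t + 1))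
        ≤ q ^ (2 * t) * q * (4 / (2 - q⁻¹) * (4 ^ t / √(t : ℝ))) :=
          mul_le_mul_of_nonneg_left (two_mul_stairTop_le hr0 hr2 ht) (by positivity)
      _ = _ := by ring
end
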